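/- If a finite multiset of k-tuples admits a nice c-coloring, then it admits a nice partial c-coloring in which each of the c colors is used on at most k+1 tuples; moreover, this partial coloring can be chosen to be a restriction of the original coloring (every tuple colored in the partial coloring keeps its original color), and from each color class of the original coloring one prescribed tuple can be required to remain colored. -/

import Mathlib

/-- `f` is a *nice (total) `c`-coloring* of the multiset `T` of tuples: the color
classes `f j` sum to `T`, and for each color `j` and every element `i` appearing in
some tuple of `T` there is a tuple of color `j` not containing `i`. -/
def NiceColoring (c : ℕ) (T : Multiset (Finset ℕ+))
    (f : Fin c → Multiset (Finset ℕ+)) : Prop :=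
  (∑ j, f j) = T ∧
  ∀ j : Fin c, ∀ i : ℕ+, (∃ t ∈ T, i ∈ t) → ∃ t ∈ f j, i ∉ t

/-- `f` is a *nice partial `c`-coloring* of the multiset `T` of tuples: the color
classes `f j` form disjoint submultisets of `T` (some tuples may stay uncolored), and
for each color `j` and every element `i` appearing in some tuple of `T` there is a
tuple of color `j` not containing `i`. -/
def NicePartialColoring (c : ℕ) (T : Multiset (Finset ℕ+))
    (f : Fin c → Multiset (Finset ℕ+)) : Prop :=
  (∑ j, f j) ≤ T ∧
  ∀ j : Fin c, ∀ i : ℕ+, (∃ t ∈ T, i ∈ t) → ∃ t ∈ f j, i ∉ t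

/-!
Each color class can be thinned out separately. Keep the prescribed tuple `s` and, for each of
its `k` elements `i`, one tuple of the class avoiding `i`. Every `i ∉ s` is avoided by `s`
itself, so the at most `k + 1` kept tuples avoid every element that the whole class avoids.
-/

theorem Multiset.exists_le_card_le_mem_avoiding {α : Type*} (F : Multiset (Finset α))
    {s : Finset α} (hs : s ∈ F) :
    ∃ G ≤ F, Multiset.card G ≤ s.card + 1 ∧ s ∈ G ∧
      ∀ i, (∃ t ∈ F, i ∉ t) → ∃ t ∈ G, i ∉ t := by
  classical
  let avoider (i : α) : Finset α := if h : ∃ t ∈ F, i ∉ t then h.choose else s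
  have avoider_mem (i : α) : avoider i ∈ F := by
    unfold avoider; split_ifs with h
    exacts [h.choose_spec.1, hs]
  have avoider_not_mem {i : α} (h : ∃ t ∈ F, i ∉ t) : i ∉ avoider i := by
    simpa only [avoider, dif_pos h] using h.choose_spec.2
  let G : Finset (Finset α) := insert s (s.image avoider)
  refine ⟨G.val, ?_, ?_, Finset.mem_insert_self s _, ?_⟩
  · rw [Multiset.le_iff_subset G.nodup]
    intro t ht
    rcases Finset.mem_insert.1 ht with rfl | ht
    · exact hs
    · obtain ⟨i, -, rfl⟩ := Finset.mem_image.1 ht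
      exact avoider_mem i
  · calc G.card ≤ (s.image avoider).card + 1 := Finset.card_insert_le _ _
      _ ≤ s.card + 1 := by gcongr; exact Finset.card_image_le
  · intro i hi
    by_cases his : i ∈ s
    · exact ⟨avoider i, Finset.mem_insert_of_mem (Finset.mem_image_of_mem _ his),
        avoider_not_mem hi⟩
    · exact ⟨s, Finset.mem_insert_self s _, his⟩

theorem nice_partial_coloring_of_nice_coloring
    (k c : ℕ) (T : Multiset (Finset ℕ+)) (hT : ∀ t ∈ T, t.card = k)
    (f : Fin c → Multiset (Finset ℕ+)) (hf : NiceColoring c T f)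
    (s : Fin c → Finset ℕ+) (hs : ∀ j, s j ∈ f j) :
    ∃ g : Fin c → Multiset (Finset ℕ+),
      (∀ j, g j ≤ f j) ∧
      (∀ j, Multiset.card (g j) ≤ k + 1) ∧
      (∀ j, s j ∈ g j) ∧
      NicePartialColoring c T g := by
  obtain ⟨hsum, hnice⟩ := hf
  have hsT (j : Fin c) : s j ∈ T := hsum ▸ Multiset.mem_sum.2 ⟨j, Finset.mem_univ j, hs j⟩
  choose g hgf hcard hsg havoid using
    fun j => Multiset.exists_le_card_le_mem_avoiding (f j) (hs j)
  refine ⟨g, hgf, fun j => hT (s j) (hsT j) ▸ hcard j, hsg, ?_, ?_⟩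
  · exact hsum ▸ Finset.sum_le_sum fun j _ => hgf j
  · exact fun j i hi => havoid j i (hnice j i hi)
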